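/- Two real polynomials F and G, with deg F = m ≥ 1 and deg G ≤ m, G ≠ 0, are coprime if and only if their Bézout matrix Bez(F,G) is nonsingular. -/

import Mathlib

open Polynomial

/-- The Bézoutian of `F` and `G`: the bivariate polynomial
`(F(x)G(y) - F(y)G(x))/(x - y)`, represented as an element of `(ℝ[X])[Y]`
where the inner variable is `x` and the outer variable is `y`. -/
noncomputable def bezoutian (F G : ℝ[X]) : Polynomial ℝ[X] :=
  -((Polynomial.C F * G.map Polynomial.C - F.map Polynomial.C * Polynomial.C G) /ₘ
      (Polynomial.X - Polynomial.C Polynomial.X))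

/-- The `m × m` Bézout matrix of `F` and `G`: entry `(i, j)` (0-based) is the
coefficient of `x^i y^j` in the Bézoutian. -/
noncomputable def bezMat (m : ℕ) (F G : ℝ[X]) : Matrix (Fin m) (Fin m) ℝ :=
  fun i j => ((bezoutian F G).coeff (j : ℕ)).coeff (i : ℕ)

/-! If `F` and `G` have a common complex root `α`, then `B(α, y) = 0` for the Bézoutian `B`, so
the row vector `(α ^ i)ᵢ` lies in the left kernel of the Bézout matrix.

Conversely, a kernel vector `v` is the reversed coefficient vector of a nonzero `U` with
`deg U < m` such that the coefficient of `y ^ (m - 1)` in `B(x, y) U(y)` vanishes. Because of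
that, taking the quotient `T` by `y ^ m` of `(y - x) B(x, y) U(y) = G(x) (F U)(y) - F(x) (G U)(y)`
gives `(y - x) T(B U) = G(x) T(F U)(y) - F(x) T(G U)(y)`, and setting `y = x` gives
`G · T(F U) = F · T(G U)`. So `F` divides `T(F U)` when `F` and `G` are coprime, although `T(F U)`
is nonzero of degree `deg U < deg F`. -/

open scoped Polynomial.Bivariate

namespace Polynomial

theorem Bivariate.coeff_coeff_swap {R : Type*} [CommSemiring R] (p : R[X][Y]) (i j : ℕ) :
    ((swap p).coeff i).coeff j = (p.coeff j).coeff i := by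
  induction p using Polynomial.induction_on' with
  | add p q hp hq => simp only [map_add, coeff_add, hp, hq]
  | monomial n a =>
    simp only [swap_monomial, coeff_mul_C, coeff_map, coeff_C_mul, coeff_X_pow, coeff_monomial]
    split_ifs <;> simp_all

theorem coeff_divByMonic_X_pow {R : Type*} [Ring R] (p : R[X]) (n k : ℕ) :
    (p /ₘ X ^ n).coeff k = p.coeff (k + n) := by
  nontriviality R
  have hmod : (p %ₘ X ^ n).coeff (k + n) = 0 := by
    apply coeff_eq_zero_of_degree_lt
    calc (p %ₘ X ^ n).degree < (X ^ n : R[X]).degree := degree_modByMonic_lt p (monic_X_pow n)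
      _ ≤ ↑(k + n) := by rw [degree_X_pow]; exact_mod_cast Nat.le_add_left n k
  conv_rhs => rw [← modByMonic_add_div p (X ^ n)]
  rw [coeff_add, hmod, coeff_X_pow_mul, zero_add]

theorem X_sub_C_mul_divByMonic_X_pow_succ {R : Type*} [Ring R] (a : R) (p : R[X]) (n : ℕ) :
    ((X - C a) * p) /ₘ X ^ (n + 1) = (X - C a) * (p /ₘ X ^ (n + 1)) + C (p.coeff n) := by
  ext k
  rcases k with _ | k
  · simp [coeff_divByMonic_X_pow, sub_mul, coeff_X_mul, coeff_C_mul, neg_add_eq_sub]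
  · simp [coeff_divByMonic_X_pow, sub_mul, coeff_X_mul, coeff_C_mul, Nat.add_right_comm k 1]

theorem coeff_coeff_mul_map_C {R : Type*} [CommSemiring R] {m : ℕ} (hm : 0 < m)
    (p : R[X][Y]) (U : R[X]) (i : ℕ) :
    ((p * U.map C).coeff (m - 1)).coeff i =
      ∑ j : Fin m, (p.coeff j).coeff i * U.coeff (m - 1 - j) := by
  rw [coeff_mul,
    Finset.Nat.sum_antidiagonal_eq_sum_range_succ (fun a b => p.coeff a * (U.map C).coeff b),
    Nat.succ_eq_add_one, Nat.sub_add_cancel hm, ← Fin.sum_univ_eq_sum_range, finsetSum_coeff]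
  simp only [coeff_map, coeff_mul_C]

theorem coeff_ofFn_comp_rev {R : Type*} [Semiring R] [DecidableEq R] {m : ℕ} (v : Fin m → R)
    (j : Fin m) :
    (ofFn m (v ∘ Fin.rev)).coeff (m - 1 - j) = v j := by
  rw [ofFn_coeff_eq_val_of_lt _ (by omega), Function.comp_apply]
  congr
  ext
  simp only [Fin.val_rev]
  omega

end Polynomial

open Polynomial.Bivariate

theorem X_sub_C_X_mul_bezoutian (F G : ℝ[X]) :
    (Y - C X) * bezoutian F G = F.map C * C G - C F * G.map C := by
  have hroot : IsRoot (C F * G.map C - F.map C * C G) X := by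
    simp [IsRoot, eval_map, eval₂_C_X, mul_comm]
  rw [bezoutian]
  linear_combination -mul_divByMonic_eq_iff_isRoot.mpr hroot

theorem swap_bezoutian (F G : ℝ[X]) : swap (bezoutian F G) = bezoutian F G := by
  have h := congrArg swap (X_sub_C_X_mul_bezoutian F G)
  simp only [map_mul, map_sub, swap_Y, swap_C, swap_map_C, map_X] at h
  refine mul_left_cancel₀ (X_sub_C_ne_zero (X : ℝ[X])) ?_
  linear_combination -h - X_sub_C_X_mul_bezoutian F G

theorem coeff_coeff_bezoutian_comm (F G : ℝ[X]) (i j : ℕ) :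
    ((bezoutian F G).coeff i).coeff j = ((bezoutian F G).coeff j).coeff i := by
  rw [← coeff_coeff_swap, swap_bezoutian]

section Degree

variable {m : ℕ} {F G : ℝ[X]} (hF : F.natDegree ≤ m) (hG : G.natDegree ≤ m)
include hF hG

theorem natDegree_bezoutian_le : (bezoutian F G).natDegree ≤ m - 1 := by
  have hnum : (C F * G.map C - F.map C * C G).natDegree ≤ m :=
    (natDegree_sub_le _ _).trans <| max_le
      ((natDegree_C_mul_le _ _).trans <| natDegree_map_le.trans hG)
      ((natDegree_mul_C_le _ _).trans <| natDegree_map_le.trans hF)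
  rw [bezoutian, natDegree_neg, natDegree_divByMonic _ (monic_X_sub_C _), natDegree_X_sub_C]
  omega

theorem natDegree_coeff_bezoutian_le (j : ℕ) : ((bezoutian F G).coeff j).natDegree ≤ m - 1 := by
  refine natDegree_le_iff_coeff_eq_zero.mpr fun i hi => ?_
  rw [coeff_coeff_bezoutian_comm,
    coeff_eq_zero_of_natDegree_lt ((natDegree_bezoutian_le hF hG).trans_lt hi), coeff_zero]

end Degree

theorem aeval_coeff_bezoutian_eq_zero {K : Type*} [CommRing K] [Algebra ℝ K] {F G : ℝ[X]}
    {α : K} (hF : aeval α F = 0) (hG : aeval α G = 0) (j : ℕ) :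
    aeval α ((bezoutian F G).coeff j) = 0 := by
  have hmap : (bezoutian F G).map (aeval α).toRingHom = 0 := by
    rw [bezoutian, Polynomial.map_neg, map_divByMonic _ (monic_X_sub_C _)]
    simp [hF, hG]
  simpa using congrArg (coeff · j) hmap

theorem det_bezMat_eq_zero_of_aeval_eq_zero {K : Type*} [Field K] [Algebra ℝ K] {m : ℕ}
    {F G : ℝ[X]} (hm : 0 < m) (hFm : F.natDegree ≤ m) (hGm : G.natDegree ≤ m) {α : K}
    (hF : aeval α F = 0) (hG : aeval α G = 0) : (bezMat m F G).det = 0 := by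
  classical
  set w : Fin m → K := fun i => α ^ (i : ℕ)
  have hw : w ≠ 0 := fun h => by simpa [w] using congrFun h ⟨0, hm⟩
  have hker : Matrix.vecMul w ((algebraMap ℝ K).mapMatrix (bezMat m F G)) = 0 := by
    ext j
    have hdeg : ((bezoutian F G).coeff j).natDegree < m :=
      (natDegree_coeff_bezoutian_le hFm hGm j).trans_lt (by omega)
    rw [Pi.zero_apply, ← aeval_coeff_bezoutian_eq_zero hF hG j, aeval_eq_sum_range' hdeg,
      ← Fin.sum_univ_eq_sum_range]
    simp [w, Matrix.vecMul, dotProduct, bezMat, Algebra.smul_def, mul_comm]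
  apply (algebraMap ℝ K).injective
  rw [RingHom.map_det, map_zero]
  exact Matrix.exists_vecMul_eq_zero_iff.mp ⟨w, hw, hker⟩

theorem mul_divByMonic_X_pow_eq_of_coeff_bezoutian_mul_eq_zero {F G U : ℝ[X]} {n : ℕ}
    (hcoeff : (bezoutian F G * U.map C).coeff n = 0) :
    G * ((F * U) /ₘ X ^ (n + 1)) = F * ((G * U) /ₘ X ^ (n + 1)) := by
  have hid : (Y - C X) * (bezoutian F G * U.map C) =
      C G * (F * U).map C - C F * (G * U).map C := by
    rw [← mul_assoc, X_sub_C_X_mul_bezoutian, Polynomial.map_mul, Polynomial.map_mul]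
    ring
  have hhigh : (C G * (F * U).map C - C F * (G * U).map C) /ₘ Y ^ (n + 1) =
      C G * ((F * U) /ₘ X ^ (n + 1)).map C - C F * ((G * U) /ₘ X ^ (n + 1)).map C := by
    ext1 k
    simp only [coeff_sub, coeff_C_mul, coeff_divByMonic_X_pow, coeff_map]
  have hsplit := congrArg (· /ₘ Y ^ (n + 1)) hid
  simp only [X_sub_C_mul_divByMonic_X_pow_succ, hcoeff, map_zero, add_zero, hhigh] at hsplit
  have heval := congrArg (eval X) hsplit
  simp only [eval_mul, eval_sub, eval_X, eval_C, sub_self, zero_mul, eval_map, eval₂_C_X] at heval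
  linear_combination -heval

theorem eq_zero_of_coeff_bezoutian_mul_eq_zero {F G U : ℝ[X]} (hco : IsCoprime F G)
    (hU : U.natDegree < F.natDegree)
    (hcoeff : (bezoutian F G * U.map C).coeff (F.natDegree - 1) = 0) : U = 0 := by
  obtain ⟨n, hn⟩ : ∃ n, F.natDegree = n + 1 := Nat.exists_eq_succ_of_ne_zero (by omega)
  rw [hn, Nat.add_sub_cancel] at hcoeff
  have hdvd : F ∣ (F * U) /ₘ X ^ (n + 1) := hco.dvd_of_dvd_mul_left
    ⟨_, mul_divByMonic_X_pow_eq_of_coeff_bezoutian_mul_eq_zero hcoeff⟩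
  have hzero : (F * U) /ₘ X ^ (n + 1) = 0 := by
    refine eq_zero_of_dvd_of_natDegree_lt hdvd ?_
    rw [natDegree_divByMonic _ (monic_X_pow _), natDegree_X_pow]
    have := natDegree_mul_le (p := F) (q := U)
    omega
  have hlead : F.leadingCoeff * U.leadingCoeff = 0 := by
    rw [← coeff_mul_degree_add_degree, hn, add_comm, ← coeff_divByMonic_X_pow, hzero,
      coeff_zero]
  have hF0 : F.leadingCoeff ≠ 0 := leadingCoeff_ne_zero.mpr (ne_zero_of_natDegree_gt hU)
  simpa [hF0] using hlead

theorem det_bezMat_ne_zero_of_isCoprime {m : ℕ} {F G : ℝ[X]} (hm : 0 < m)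
    (hF : F.natDegree = m) (hG : G.natDegree ≤ m) (hco : IsCoprime F G) :
    (bezMat m F G).det ≠ 0 := by
  intro hdet
  obtain ⟨v, hv0, hv⟩ := Matrix.exists_mulVec_eq_zero_iff.mpr hdet
  have hcoeff : (bezoutian F G * (ofFn m (v ∘ Fin.rev)).map C).coeff (m - 1) = 0 := by
    ext i
    rw [coeff_coeff_mul_map_C hm, coeff_zero]
    simp only [coeff_ofFn_comp_rev]
    by_cases hi : i < m
    · exact congrFun hv ⟨i, hi⟩
    · refine Finset.sum_eq_zero fun j _ => ?_
      rw [coeff_eq_zero_of_natDegree_lt ((natDegree_coeff_bezoutian_le hF.le hG j).trans_lt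
        (by omega)), zero_mul]
  have hU : ofFn m (v ∘ Fin.rev) = 0 := by
    refine eq_zero_of_coeff_bezoutian_mul_eq_zero hco ?_ ?_ <;> rw [hF]
    exacts [ofFn_natDegree_lt hm _, hcoeff]
  exact hv0 (funext fun j => by rw [← coeff_ofFn_comp_rev v j, hU, coeff_zero, Pi.zero_apply])

theorem isCoprime_iff_bezMat_det_ne_zero_general (m : ℕ) (F G : ℝ[X])
    (hm : 1 ≤ m) (hF : F.natDegree = m) (hG : G.natDegree ≤ m) :
    IsCoprime F G ↔ (bezMat m F G).det ≠ 0 := by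
  refine ⟨det_bezMat_ne_zero_of_isCoprime hm hF hG, fun hdet => by_contra fun hco => hdet ?_⟩
  obtain ⟨α, hFα, hGα⟩ : ∃ α : ℂ, aeval α F = 0 ∧ aeval α G = 0 := by
    rw [isCoprime_iff_aeval_ne_zero_of_isAlgClosed ℝ ℂ] at hco
    push Not at hco
    exact hco
  exact det_bezMat_eq_zero_of_aeval_eq_zero hm hF.le hG hFα hGα

theorem isCoprime_iff_bezMat_det_ne_zero (m : ℕ) (F G : ℝ[X])
    (hm : 1 ≤ m) (hF : F.natDegree = m) (hG : G.natDegree ≤ m) (hG0 : G ≠ 0) :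
    IsCoprime F G ↔ (bezMat m F G).det ≠ 0 :=
  isCoprime_iff_bezMat_det_ne_zero_general m F G hm hF hG
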